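/- arXiv:1411.1252 — 4 statements merged into one kernel-verified Lean document; each statement's English description precedes it below -/
import Mathlib

section
/- Let H be a separable complex Hilbert space, Γ a countable discrete abelian group, π a unitary representation of Γ on H, α : Γ → Γ a group homomorphism, and δ a unitary operator on H satisfying δ⁻¹ π(γ) δ = π(α(γ)) for all γ ∈ Γ. Let ψ ∈ H. If the affine system (δ^j π(γ) ψ) indexed by (j,γ) ∈ ℤ × Γ is a Parseval frame for H, then for every integer k ≥ 0 the subspace V_k = closed linear span of {δ^j π(γ) ψ : j < k, γ ∈ Γ} is π-invariant. -/
/-!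
Let `V` be the closed span of `δ^j π(γ) ψ`, `j < k`. It suffices that `Vᗮ` is `π`-invariant.
For `j ≥ 0` the covariance relation gives `π(γ₀) δ^j π(γ) ψ = δ^j π(α^j(γ₀) γ) ψ`, so for
`u ∈ Vᗮ` the frame coefficients of `π(γ₀) u` at the indices `j ≥ k ≥ 0` are a permutation of
those of `u`. By the Parseval identity the latter already carry all of `‖u‖² = ‖π(γ₀) u‖²`,
so the coefficients of `π(γ₀) u` at the indices `j < k` vanish.
-/

noncomputable section

/-- The action of a unitary operator on a Hilbert space vector. -/
def uact {H : Type*} [NormedAddCommGroup H] [InnerProductSpace ℂ H] [CompleteSpace H]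
    (u : unitary (H →L[ℂ] H)) (x : H) : H := (u : H →L[ℂ] H) x

open scoped InnerProductSpace

section Frame

variable {𝕜 H ι : Type*} [RCLike 𝕜] [NormedAddCommGroup H] [InnerProductSpace 𝕜 H]

variable (𝕜) in
def IsParsevalFrame (e : ι → H) : Prop :=
  ∀ f : H, ∑' i, ‖⟪f, e i⟫_𝕜‖ ^ 2 = ‖f‖ ^ 2

theorem IsParsevalFrame.hasSum {e : ι → H} (he : IsParsevalFrame 𝕜 e) (f : H) :
    HasSum (fun i => ‖⟪f, e i⟫_𝕜‖ ^ 2) (‖f‖ ^ 2) := by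
  by_cases hs : Summable fun i => ‖⟪f, e i⟫_𝕜‖ ^ 2
  · exact he f ▸ hs.hasSum
  · have hf : f = 0 := by simpa [tsum_eq_zero_of_not_summable hs] using (he f).symm
    simp [hf, hasSum_zero]

/-- `u` already has all its frame energy off `A`, so `v`, of the same norm, has none left
for `A`. -/
theorem IsParsevalFrame.inner_eq_zero_of_norm_eq {e : ι → H} (he : IsParsevalFrame 𝕜 e)
    (σ : ι ≃ ι) {A : Set ι} (hσA : ∀ i, σ i ∈ A → i ∈ A) {u v : H} (hv : ‖v‖ = ‖u‖)
    (hσ : ∀ i ∉ A, ‖⟪v, e (σ i)⟫_𝕜‖ = ‖⟪u, e i⟫_𝕜‖) (hu : ∀ i ∈ A, ⟪u, e i⟫_𝕜 = 0) :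
    ∀ i ∈ A, ⟪v, e i⟫_𝕜 = 0 := by
  have hsum_v : HasSum (fun i => ‖⟪v, e (σ i)⟫_𝕜‖ ^ 2) (‖u‖ ^ 2) :=
    hv ▸ (σ.hasSum_iff (f := fun i => ‖⟪v, e i⟫_𝕜‖ ^ 2)).mpr (he.hasSum v)
  have hle : (fun i => ‖⟪u, e i⟫_𝕜‖ ^ 2) ≤ fun i => ‖⟪v, e (σ i)⟫_𝕜‖ ^ 2 := by
    intro i
    by_cases hi : i ∈ A
    · simp [hu i hi]
    · simp [hσ i hi]
  intro i hi
  by_contra hne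
  have hlt : ‖⟪u, e (σ.symm i)⟫_𝕜‖ ^ 2 < ‖⟪v, e (σ (σ.symm i))⟫_𝕜‖ ^ 2 := by
    rw [hu _ (hσA _ (by simpa using hi)), σ.apply_symm_apply, norm_zero, zero_pow two_ne_zero]
    exact pow_pos (norm_pos_iff.mpr hne) 2
  exact lt_irrefl _ (hasSum_lt hle hlt (he.hasSum u) hsum_v)

theorem Submodule.mem_orthogonal_span_iff {s : Set H} {v : H} :
    v ∈ (Submodule.span 𝕜 s)ᗮ ↔ ∀ x ∈ s, ⟪v, x⟫_𝕜 = 0 := by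
  rw [← Submodule.span_singleton_le_iff_mem, ← Submodule.isOrtho_iff_le, Submodule.isOrtho_span]
  simp

theorem Submodule.apply_mem_topologicalClosure_of_adjoint_mem_orthogonal [CompleteSpace H]
    {K : Submodule 𝕜 H} (T : H →L[𝕜] H) (hK : ∀ w ∈ Kᗮ, T.adjoint w ∈ Kᗮ) :
    ∀ v ∈ K.topologicalClosure, T v ∈ K.topologicalClosure := by
  rw [← K.orthogonal_orthogonal_eq_closure]
  exact (Module.End.mem_invtSubmodule_iff_forall_mem_of_mem _).mp
    (ContinuousLinearMap.orthogonal_mem_invtSubmodule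
      ((Module.End.mem_invtSubmodule_iff_forall_mem_of_mem _).mpr hK))

end Frame

section Covariance

variable {G Γ : Type*} [Group G] [Monoid Γ] {π : Γ →* G} {α : Γ →* Γ} {δ : G}

theorem map_mul_pow_eq_pow_mul_map_iterate (h : ∀ γ, δ⁻¹ * π γ * δ = π (α γ)) (n : ℕ) (γ : Γ) :
    π γ * δ ^ n = δ ^ n * π (α^[n] γ) := by
  induction n generalizing γ with
  | zero => simp
  | succ n ih =>
    have hδ : π γ * δ = δ * π (α γ) := by rw [← h]; group
    calc π γ * δ ^ (n + 1) = δ * (π (α γ) * δ ^ n) := by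
          rw [pow_succ', ← mul_assoc, hδ, mul_assoc]
      _ = δ ^ (n + 1) * π (α^[n + 1] γ) := by
          rw [ih, ← mul_assoc, ← pow_succ', Function.iterate_succ_apply]

theorem pow_mul_map_iterate_mul (h : ∀ γ, δ⁻¹ * π γ * δ = π (α γ)) (n : ℕ) (γ γ' : Γ) :
    δ ^ n * π (α^[n] γ * γ') = π γ * (δ ^ n * π γ') := by
  rw [map_mul, ← mul_assoc, ← map_mul_pow_eq_pow_mul_map_iterate h, mul_assoc]

end Covariance

section AffineSystem

variable {H Γ : Type*} [NormedAddCommGroup H] [InnerProductSpace ℂ H] [CompleteSpace H]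
  [Group Γ] {π : Γ →* unitary (H →L[ℂ] H)} {α : Γ →* Γ} {δ : unitary (H →L[ℂ] H)}

variable (π δ) in
def affineSystem (ψ : H) (p : ℤ × Γ) : H :=
  uact (δ ^ p.1) (uact (π p.2) ψ)

theorem affineSystem_shear (hcompat : ∀ γ, δ⁻¹ * π γ * δ = π (α γ)) (ψ : H) {j : ℤ}
    (hj : 0 ≤ j) (γ₀ γ' : Γ) :
    affineSystem π δ ψ (j, α^[j.toNat] γ₀ * γ') = uact (π γ₀) (affineSystem π δ ψ (j, γ')) := by
  lift j to ℕ using hj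
  have h := congrArg (fun u : unitary (H →L[ℂ] H) => (u : H →L[ℂ] H) ψ)
    (pow_mul_map_iterate_mul hcompat j γ₀ γ')
  simpa [affineSystem, uact] using h

theorem inner_affineSystem_eq_zero (hcompat : ∀ γ, δ⁻¹ * π γ * δ = π (α γ)) {ψ : H}
    (hframe : IsParsevalFrame ℂ (affineSystem π δ ψ)) {k : ℤ} (hk : 0 ≤ k) (γ₀ : Γ) {u : H}
    (hu : ∀ p ∈ {p : ℤ × Γ | p.1 < k}, ⟪u, affineSystem π δ ψ p⟫_ℂ = 0) :
    ∀ p ∈ {p : ℤ × Γ | p.1 < k}, ⟪uact (π γ₀) u, affineSystem π δ ψ p⟫_ℂ = 0 := by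
  let shear : ℤ × Γ ≃ ℤ × Γ :=
    Equiv.prodShear (Equiv.refl ℤ) fun j => Equiv.mulLeft (α^[j.toNat] γ₀)
  refine hframe.inner_eq_zero_of_norm_eq shear (fun _ h => h) (Unitary.norm_map _ _)
    (fun p hp => ?_) hu
  have hp : 0 ≤ p.1 := hk.trans (not_lt.mp hp)
  simp only [shear, Equiv.prodShear_apply, Equiv.refl_apply, Equiv.coe_mulLeft,
    affineSystem_shear hcompat ψ hp, uact, Unitary.inner_map_map]

end AffineSystem

theorem stmt2_general
    {H : Type*} [NormedAddCommGroup H] [InnerProductSpace ℂ H] [CompleteSpace H]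
    {Γ : Type*} [CommGroup Γ]
    (π : Γ →* unitary (H →L[ℂ] H))
    (α : Γ →* Γ)
    (δ : unitary (H →L[ℂ] H))
    (hcompat : ∀ γ : Γ, δ⁻¹ * (π γ) * δ = π (α γ))
    (ψ : H)
    (hframe : ∀ f : H,
      ∑' p : ℤ × Γ, ‖(inner ℂ f (uact (δ ^ p.1) (uact (π p.2) ψ)) : ℂ)‖ ^ 2 = ‖f‖ ^ 2) :
    ∀ k : ℤ, 0 ≤ k → ∀ γ : Γ,
      ∀ v ∈ (Submodule.span ℂ
        {x : H | ∃ j : ℤ, j < k ∧ ∃ γ' : Γ, x = uact (δ ^ j) (uact (π γ') ψ)}).topologicalClosure,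
      uact (π γ) v ∈ (Submodule.span ℂ
        {x : H | ∃ j : ℤ, j < k ∧ ∃ γ' : Γ, x = uact (δ ^ j) (uact (π γ') ψ)}).topologicalClosure := by
  intro k hk γ
  have hspan : {x : H | ∃ j : ℤ, j < k ∧ ∃ γ' : Γ, x = uact (δ ^ j) (uact (π γ') ψ)} =
      affineSystem π δ ψ '' {p | p.1 < k} := by
    ext x
    simp [affineSystem, eq_comm]
  rw [hspan]
  refine Submodule.apply_mem_topologicalClosure_of_adjoint_mem_orthogonal (π γ : H →L[ℂ] H)
    fun w hw => ?_
  rw [← ContinuousLinearMap.star_eq_adjoint, ← Unitary.coe_star, Unitary.star_eq_inv, ← map_inv]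
  rw [Submodule.mem_orthogonal_span_iff, Set.forall_mem_image] at hw ⊢
  exact inner_affineSystem_eq_zero hcompat hframe hk γ⁻¹ hw

/-- if the affine system is a Parseval frame, then for every `k ≥ 0` the space
`V_k` spanned by the dilates of order `< k` is `π`-invariant. -/
theorem stmt2
    {H : Type*} [NormedAddCommGroup H] [InnerProductSpace ℂ H] [CompleteSpace H]
    [TopologicalSpace.SeparableSpace H]
    {Γ : Type*} [CommGroup Γ] [Countable Γ]
    (π : Γ →* unitary (H →L[ℂ] H))
    (α : Γ →* Γ)
    (δ : unitary (H →L[ℂ] H))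
    (hcompat : ∀ γ : Γ, δ⁻¹ * (π γ) * δ = π (α γ))
    (ψ : H)
    (hframe : ∀ f : H,
      ∑' p : ℤ × Γ, ‖(inner ℂ f (uact (δ ^ p.1) (uact (π p.2) ψ)) : ℂ)‖ ^ 2 = ‖f‖ ^ 2) :
    ∀ k : ℤ, 0 ≤ k → ∀ γ : Γ,
      ∀ v ∈ (Submodule.span ℂ
        {x : H | ∃ j : ℤ, j < k ∧ ∃ γ' : Γ, x = uact (δ ^ j) (uact (π γ') ψ)}).topologicalClosure,
      uact (π γ) v ∈ (Submodule.span ℂ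
        {x : H | ∃ j : ℤ, j < k ∧ ∃ γ' : Γ, x = uact (δ ^ j) (uact (π γ') ψ)}).topologicalClosure :=
  stmt2_general π α δ hcompat ψ hframe
end
end

section
/- Let H be a separable complex Hilbert space, Γ a countable discrete abelian group, π a unitary representation of Γ on H, and δ a unitary operator on H. Let ψ ∈ H and V₀ = closed linear span of {δ^j π(γ) ψ : j < 0, γ ∈ Γ}. Assume V₀ is π-invariant and V₀ ≠ δ(V₀), and assume that for every nonzero f ∈ H the family (π(γ) f)_{γ∈Γ} is linearly independent. Then the affine system (δ^j π(γ) ψ) indexed by (j,γ) ∈ ℤ × Γ is linearly independent. -/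
noncomputable section

/-!
Since `V₀` is closed and `δ⁻¹ V₀ ⊆ V₀`, the hypothesis `δ V₀ ≠ V₀` forces `ψ ∉ V₀` (otherwise also
`δ V₀ ⊆ V₀`). Modulo `V₀`, the `π`-orbit of `ψ` is then the orbit of the nonzero component of `ψ`
orthogonal to `V₀`; this orbit lies in the `π`-invariant space `V₀ᗮ`, which meets `V₀` only in `0`,
so the `π γ ψ` are independent modulo `V₀`. Finally, apply `δ ^ (-J)` to a vanishing finite
combination of the `δ ^ j (π γ ψ)`, where `J` is the top level occurring: all lower levels land in
`V₀`, so the top coefficients vanish.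
-/

open Submodule

section ShiftedFamily

variable {R M G ι : Type*} [Ring R] [AddCommGroup M] [Module R M]
  [Group G] [DistribMulAction G M] [SMulCommClass G R M]
  {V : Submodule R M} {δ : G} {v : ι → M}

theorem coeff_top_eq_zero_of_sum_zpow_smul_eq_zero
    (hV : ∀ j : ℤ, j < 0 → ∀ i, (δ ^ j) • v i ∈ V) (hv : LinearIndependent R (V.mkQ ∘ v))
    {s : Finset (ℤ × ι)} {g : ℤ × ι → R} (hg : ∑ q ∈ s, g q • (δ ^ q.1) • v q.2 = 0)
    {J : ℤ} (hJ : ∀ q ∈ s, q.1 ≤ J) {i : ι} (hi : (J, i) ∈ s) : g (J, i) = 0 := by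
  have hinj : Set.InjOn (Prod.mk J) (Prod.mk J ⁻¹' (s : Set (ℤ × ι))) :=
    (Prod.mk_right_injective J).injOn
  have htop : ∑ i ∈ s.preimage (Prod.mk J) hinj, g (J, i) • V.mkQ (v i) = 0 := by
    calc ∑ i ∈ s.preimage (Prod.mk J) hinj, g (J, i) • V.mkQ (v i)
        = ∑ i ∈ s.preimage (Prod.mk J) hinj, g (J, i) • V.mkQ ((δ ^ (-J + J)) • v i) := by
          simp only [neg_add_cancel, zpow_zero, one_smul]
      _ = ∑ q ∈ s, g q • V.mkQ ((δ ^ (-J + q.1)) • v q.2) := by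
          refine Finset.sum_preimage _ _ hinj (fun q => g q • V.mkQ ((δ ^ (-J + q.1)) • v q.2))
            fun q hq hqJ => ?_
          have hlt : -J + q.1 < 0 := by
            have : q.1 ≠ J := fun h => hqJ ⟨q.2, by rw [← h]⟩
            have := hJ q hq
            omega
          rw [mkQ_apply, (Quotient.mk_eq_zero V).2 (hV _ hlt _), smul_zero]
      _ = V.mkQ ((δ ^ (-J)) • ∑ q ∈ s, g q • (δ ^ q.1) • v q.2) := by
          simp only [Finset.smul_sum, map_sum, map_smul, smul_comm (δ ^ (-J)), smul_smul,
            zpow_add]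
      _ = 0 := by rw [hg, smul_zero, map_zero]
  exact linearIndependent_iff'.1 hv _ _ htop i (Finset.mem_preimage.2 hi)

theorem linearIndependent_zpow_smul
    (hV : ∀ j : ℤ, j < 0 → ∀ i, (δ ^ j) • v i ∈ V) (hv : LinearIndependent R (V.mkQ ∘ v)) :
    LinearIndependent R (fun q : ℤ × ι => (δ ^ q.1) • v q.2) := by
  classical
  rw [linearIndependent_iff']
  intro s g hg p hp
  by_contra hgp
  set t := s.filter (g · ≠ 0)
  have ht : ∑ q ∈ t, g q • (δ ^ q.1) • v q.2 = 0 := by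
    rwa [Finset.sum_filter_of_ne fun q _ h => left_ne_zero_of_smul h]
  obtain ⟨q, hqt, hmax⟩ := t.exists_max_image Prod.fst ⟨p, Finset.mem_filter.2 ⟨hp, hgp⟩⟩
  exact (Finset.mem_filter.1 hqt).2 (coeff_top_eq_zero_of_sum_zpow_smul_eq_zero hV hv ht hmax hqt)

end ShiftedFamily

section Hilbert

variable {H : Type*} [NormedAddCommGroup H] [InnerProductSpace ℂ H] [CompleteSpace H]

theorem uact_eq_smul (u : unitary (H →L[ℂ] H)) (x : H) : uact u x = u • x :=
  rfl

theorem Unitary.smul_mem_orthogonal {K : Submodule ℂ H} {u : unitary (H →L[ℂ] H)}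
    (hK : ∀ v ∈ K, u⁻¹ • v ∈ K) {g : H} (hg : g ∈ Kᗮ) : u • g ∈ Kᗮ := by
  rw [mem_orthogonal]
  intro v hv
  calc inner ℂ v (u • g) = inner ℂ (u • u⁻¹ • v) (u • g) := by rw [smul_inv_smul]
    _ = inner ℂ (u⁻¹ • v) g := Unitary.inner_map_map u _ _
    _ = 0 := (mem_orthogonal K g).1 hg _ (hK v hv)

theorem linearIndependent_mkQ_unitary_smul {Γ : Type*} [Group Γ] (π : Γ →* unitary (H →L[ℂ] H))
    {K : Submodule ℂ H} [K.HasOrthogonalProjection] (hK : ∀ γ, ∀ v ∈ K, π γ • v ∈ K)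
    (hind : ∀ f : H, f ≠ 0 → LinearIndependent ℂ (fun γ => π γ • f)) {ψ : H} (hψ : ψ ∉ K) :
    LinearIndependent ℂ (K.mkQ ∘ fun γ => π γ • ψ) := by
  set g := ψ - K.starProjection ψ
  have hg : g ∈ Kᗮ := K.sub_starProjection_mem_orthogonal ψ
  have hg0 : g ≠ 0 := fun h => hψ (sub_eq_zero.1 h ▸ K.starProjection_apply_mem ψ)
  have horbit : K.mkQ ∘ (fun γ => π γ • ψ) = K.mkQ ∘ fun γ => π γ • g := by
    funext γ
    refine (Submodule.Quotient.eq K).2 ?_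
    simpa only [g, smul_sub, sub_sub_cancel] using hK γ _ (K.starProjection_apply_mem ψ)
  have hspan : span ℂ (Set.range fun γ => π γ • g) ≤ Kᗮ := by
    refine span_le.2 (Set.range_subset_iff.2 fun γ => Unitary.smul_mem_orthogonal ?_ hg)
    simpa only [← map_inv] using hK γ⁻¹
  rw [horbit]
  exact (hind g hg0).map (by rw [ker_mkQ]; exact K.orthogonal_disjoint.symm.mono_left hspan)

section NegDilateSpan

variable {Γ : Type*} [Group Γ]

def negDilateSpan (δ : unitary (H →L[ℂ] H)) (π : Γ →* unitary (H →L[ℂ] H)) (ψ : H) :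
    Submodule ℂ H :=
  (span ℂ {x : H | ∃ j : ℤ, j < 0 ∧ ∃ γ : Γ, x = (δ ^ j) • π γ • ψ}).topologicalClosure

variable {δ : unitary (H →L[ℂ] H)} {π : Γ →* unitary (H →L[ℂ] H)} {ψ : H}

instance : (negDilateSpan δ π ψ).HasOrthogonalProjection := by
  unfold negDilateSpan
  infer_instance

theorem zpow_smul_mem_negDilateSpan {j : ℤ} (hj : j < 0) (γ : Γ) :
    (δ ^ j) • π γ • ψ ∈ negDilateSpan δ π ψ :=
  le_topologicalClosure _ (subset_span ⟨j, hj, γ, rfl⟩)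

theorem negDilateSpan_le {N : Submodule ℂ H} (hN : IsClosed (N : Set H))
    (h : ∀ j : ℤ, j < 0 → ∀ γ, (δ ^ j) • π γ • ψ ∈ N) : negDilateSpan δ π ψ ≤ N :=
  topologicalClosure_minimal _ (span_le.2 fun _ ⟨j, hj, γ, hx⟩ => hx ▸ h j hj γ) hN

theorem negDilateSpan_le_comap {u : unitary (H →L[ℂ] H)}
    (h : ∀ j : ℤ, j < 0 → ∀ γ, u • (δ ^ j) • π γ • ψ ∈ negDilateSpan δ π ψ) :
    negDilateSpan δ π ψ ≤ (negDilateSpan δ π ψ).comap ((u : H →L[ℂ] H) : H →ₗ[ℂ] H) :=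
  negDilateSpan_le ((isClosed_topologicalClosure _).preimage (u : H →L[ℂ] H).continuous) h

theorem inv_smul_mem_negDilateSpan {x : H} (hx : x ∈ negDilateSpan δ π ψ) :
    δ⁻¹ • x ∈ negDilateSpan δ π ψ := by
  refine negDilateSpan_le_comap (fun j hj γ => ?_) hx
  rw [smul_smul, ← zpow_neg_one, ← zpow_add]
  exact zpow_smul_mem_negDilateSpan (by omega) γ

theorem notMem_negDilateSpan (hπ : ∀ γ, ∀ v ∈ negDilateSpan δ π ψ, π γ • v ∈ negDilateSpan δ π ψ)
    (hne : (negDilateSpan δ π ψ).map ((δ : H →L[ℂ] H) : H →ₗ[ℂ] H) ≠ negDilateSpan δ π ψ) :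
    ψ ∉ negDilateSpan δ π ψ := by
  intro hψ
  refine hne (le_antisymm (map_le_iff_le_comap.2 (negDilateSpan_le_comap fun j hj γ => ?_))
    fun x hx => ⟨δ⁻¹ • x, inv_smul_mem_negDilateSpan hx, smul_inv_smul δ x⟩)
  rw [smul_smul, ← zpow_one_add]
  rcases (by omega : 1 + j < 0 ∨ 1 + j = 0) with h | h
  · exact zpow_smul_mem_negDilateSpan h γ
  · rw [h, zpow_zero, one_smul]
    exact hπ γ ψ hψ

end NegDilateSpan

end Hilbert

theorem stmt3_general
    {H : Type*} [NormedAddCommGroup H] [InnerProductSpace ℂ H] [CompleteSpace H]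
    {Γ : Type*} [CommGroup Γ]
    (π : Γ →* unitary (H →L[ℂ] H))
    (δ : unitary (H →L[ℂ] H))
    (ψ : H)
    (V₀ : Submodule ℂ H)
    (hV₀ : V₀ = (Submodule.span ℂ
      {x : H | ∃ j : ℤ, j < 0 ∧ ∃ γ : Γ, x = uact (δ ^ j) (uact (π γ) ψ)}).topologicalClosure)
    (hV₀inv : ∀ γ : Γ, ∀ v ∈ V₀, uact (π γ) v ∈ V₀)
    (hne : V₀.map ((δ : H →L[ℂ] H) : H →ₗ[ℂ] H) ≠ V₀)
    (hind : ∀ f : H, f ≠ 0 → LinearIndependent ℂ (fun γ : Γ => uact (π γ) f)) :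
    LinearIndependent ℂ (fun p : ℤ × Γ => uact (δ ^ p.1) (uact (π p.2) ψ)) := by
  simp only [uact_eq_smul] at hV₀ hV₀inv hind ⊢
  change V₀ = negDilateSpan δ π ψ at hV₀
  subst hV₀
  exact linearIndependent_zpow_smul (v := fun γ => π γ • ψ)
    (fun j hj γ => zpow_smul_mem_negDilateSpan hj γ)
    (linearIndependent_mkQ_unitary_smul π hV₀inv hind (notMem_negDilateSpan hV₀inv hne))

theorem stmt3
    {H : Type*} [NormedAddCommGroup H] [InnerProductSpace ℂ H] [CompleteSpace H]
    [TopologicalSpace.SeparableSpace H]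
    {Γ : Type*} [CommGroup Γ] [Countable Γ]
    (π : Γ →* unitary (H →L[ℂ] H))
    (δ : unitary (H →L[ℂ] H))
    (ψ : H)
    (V₀ : Submodule ℂ H)
    (hV₀ : V₀ = (Submodule.span ℂ
      {x : H | ∃ j : ℤ, j < 0 ∧ ∃ γ : Γ, x = uact (δ ^ j) (uact (π γ) ψ)}).topologicalClosure)
    (hV₀inv : ∀ γ : Γ, ∀ v ∈ V₀, uact (π γ) v ∈ V₀)
    (hne : V₀.map ((δ : H →L[ℂ] H) : H →ₗ[ℂ] H) ≠ V₀)
    (hind : ∀ f : H, f ≠ 0 → LinearIndependent ℂ (fun γ : Γ => uact (π γ) f)) :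
    LinearIndependent ℂ (fun p : ℤ × Γ => uact (δ ^ p.1) (uact (π p.2) ψ)) :=
  stmt3_general π δ ψ V₀ hV₀ hV₀inv hne hind
end
end

section
/- Let H be a separable complex Hilbert space, Γ a countable discrete abelian group, π a unitary representation of Γ on H, and δ a unitary operator on H. Let ψ₁, …, ψ_n ∈ H be nonzero vectors and let V₀ be the closed linear span of {δ^j π(γ) ψ_i : j < 0, γ ∈ Γ, 1 ≤ i ≤ n}; let P denote the orthogonal projection of H onto V₀. Assume V₀ is π-invariant, that no ψ_i belongs to V₀, and that the family (π(γ)(I − P)ψ_i) indexed by (γ,i) ∈ Γ × {1,…,n} is linearly independent. Then the affine system (δ^j π(γ) ψ_i) indexed by (j,γ,i) ∈ ℤ × Γ × {1,…,n} is linearly independent. -/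
/-! Order the affine system by the dilation index `j`. In a vanishing finite combination let
`j₀` be the largest index that occurs, and apply `(I - P) δ^(-j₀)`: the terms with `j < j₀` are
moved into `V₀` and killed, while the terms with `j = j₀` become `π(γ)(I - P)ψᵢ`, because `P`
commutes with `π` (both `V₀` and `V₀ᗮ` are `π`-invariant). Independence of these vectors forces
the top coefficients to vanish, a contradiction. -/

noncomputable section

open Finsupp in
theorem linearIndependent_prod_of_triangular {R M N κ ι : Type*} [Ring R]
    [AddCommGroup M] [Module R M] [AddCommGroup N] [Module R N] [LinearOrder κ]
    {f : κ × ι → M} (L : κ → M →ₗ[R] N)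
    (h_lower : ∀ j₀ j i, j < j₀ → L j₀ (f (j, i)) = 0)
    (h_diag : ∀ j, LinearIndependent R fun i => L j (f (j, i))) :
    LinearIndependent R f := by
  rw [linearIndependent_iff]
  intro l hl
  by_contra hl_ne
  have hsupp : l.curry.support.Nonempty := by
    rw [support_nonempty_iff]
    exact fun h => hl_ne (curryEquiv.injective h)
  set j₀ := l.curry.support.max' hsupp
  have hj₀ : j₀ ∈ l.curry.support := Finset.max'_mem _ hsupp
  have h_top : linearCombination R (fun i => L j₀ (f (j₀, i))) (l.curry j₀) = 0 := by
    calc linearCombination R (fun i => L j₀ (f (j₀, i))) (l.curry j₀)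
        = ∑ j ∈ l.curry.support, linearCombination R (fun i => L j₀ (f (j, i))) (l.curry j) := by
          rw [Finset.sum_eq_single_of_mem j₀ hj₀]
          intro j hj hne
          have hlt : j < j₀ := lt_of_le_of_ne (Finset.le_max' _ _ hj) hne
          simp [linearCombination_apply, h_lower j₀ j _ hlt]
      _ = L j₀ (linearCombination R f l) := by
          rw [apply_linearCombination]
          simp only [linearCombination_apply, Function.comp_apply]
          exact sum_curry_index l fun j i r => r • L j₀ (f (j, i))
      _ = 0 := by rw [hl, map_zero]
  exact mem_support_iff.mp hj₀ (linearIndependent_iff.mp (h_diag j₀) _ h_top)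

def IsOrthogonalProjection {𝕜 E : Type*} [RCLike 𝕜] [NormedAddCommGroup E]
    [InnerProductSpace 𝕜 E] (V : Submodule 𝕜 E) (P : E → E) : Prop :=
  ∀ x, P x ∈ V ∧ x - P x ∈ Vᗮ

namespace IsOrthogonalProjection

variable {𝕜 E : Type*} [RCLike 𝕜] [NormedAddCommGroup E] [InnerProductSpace 𝕜 E]
  {V : Submodule 𝕜 E} {P : E → E}

theorem eq_of_mem_of_sub_mem_orthogonal (hP : IsOrthogonalProjection V P) {x a : E}
    (ha : a ∈ V) (hxa : x - a ∈ Vᗮ) : P x = a := by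
  have h_perp : P x - a ∈ Vᗮ := by
    simpa using Vᗮ.sub_mem hxa (hP x).2
  exact sub_eq_zero.mp <| (Submodule.mem_bot 𝕜).mp <|
    V.orthogonal_disjoint.le_bot ⟨V.sub_mem (hP x).1 ha, h_perp⟩

theorem apply_of_mem (hP : IsOrthogonalProjection V P) {v : E} (hv : v ∈ V) : P v = v :=
  hP.eq_of_mem_of_sub_mem_orthogonal hv (by simp)

theorem apply_comm_of_invariant [CompleteSpace E] (hP : IsOrthogonalProjection V P)
    (T : E →L[𝕜] E) (hT : ∀ v ∈ V, T v ∈ V) (hT_adj : ∀ v ∈ V, T.adjoint v ∈ V) (x : E) :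
    P (T x) = T (P x) := by
  refine hP.eq_of_mem_of_sub_mem_orthogonal (hT _ (hP x).1) ?_
  rw [← map_sub, Submodule.mem_orthogonal]
  intro v hv
  rw [← ContinuousLinearMap.adjoint_inner_left]
  exact (hP x).2 _ (hT_adj v hv)

end IsOrthogonalProjection

section Unitary

variable {H : Type*} [NormedAddCommGroup H] [InnerProductSpace ℂ H] [CompleteSpace H]

theorem uact_mul (u v : unitary (H →L[ℂ] H)) (x : H) : uact (u * v) x = uact u (uact v x) :=
  rfl

theorem uact_one (x : H) : uact 1 x = x :=
  rfl

theorem uact_sub (u : unitary (H →L[ℂ] H)) (x y : H) : uact u (x - y) = uact u x - uact u y :=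
  map_sub _ x y

theorem uact_zpow_neg_zpow (δ : unitary (H →L[ℂ] H)) (k j : ℤ) (x : H) :
    uact (δ ^ (-k)) (uact (δ ^ j) x) = uact (δ ^ (j - k)) x := by
  rw [← uact_mul, ← zpow_add, neg_add_eq_sub]

theorem IsOrthogonalProjection.apply_uact_comm {Γ : Type*} [Group Γ] {V : Submodule ℂ H}
    {P : H → H} (hP : IsOrthogonalProjection V P) (π : Γ →* unitary (H →L[ℂ] H))
    (hV : ∀ γ, ∀ v ∈ V, uact (π γ) v ∈ V) (γ : Γ) (x : H) :
    P (uact (π γ) x) = uact (π γ) (P x) := by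
  refine hP.apply_comm_of_invariant _ (hV γ) (fun v hv => ?_) x
  rw [← ContinuousLinearMap.star_eq_adjoint, ← Unitary.coe_star, Unitary.star_eq_inv, ← map_inv]
  exact hV γ⁻¹ v hv

end Unitary

theorem stmt4_general
    {H : Type*} [NormedAddCommGroup H] [InnerProductSpace ℂ H] [CompleteSpace H]
    {Γ : Type*} [CommGroup Γ]
    (π : Γ →* unitary (H →L[ℂ] H))
    (δ : unitary (H →L[ℂ] H))
    (n : ℕ) (ψ : Fin n → H)
    (V₀ : Submodule ℂ H)
    (hV₀ : V₀ = (Submodule.span ℂ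
      {x : H | ∃ j : ℤ, j < 0 ∧ ∃ γ : Γ, ∃ i : Fin n,
        x = uact (δ ^ j) (uact (π γ) (ψ i))}).topologicalClosure)
    -- `P` is the orthogonal projection of `H` onto `V₀`
    (P : H →L[ℂ] H)
    (hP : ∀ x : H, P x ∈ V₀ ∧ x - P x ∈ V₀ᗮ)
    (hV₀inv : ∀ γ : Γ, ∀ v ∈ V₀, uact (π γ) v ∈ V₀)
    (hind : LinearIndependent ℂ (fun q : Γ × Fin n => uact (π q.1) (ψ q.2 - P (ψ q.2)))) :
    LinearIndependent ℂ
      (fun t : ℤ × Γ × Fin n => uact (δ ^ t.1) (uact (π t.2.1) (ψ t.2.2))) := by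
  have hP : IsOrthogonalProjection V₀ P := hP
  have h_gen : ∀ j : ℤ, j < 0 → ∀ γ i, uact (δ ^ j) (uact (π γ) (ψ i)) ∈ V₀ := fun j hj γ i =>
    hV₀ ▸ Submodule.le_topologicalClosure _ (Submodule.subset_span ⟨j, hj, γ, i, rfl⟩)
  refine linearIndependent_prod_of_triangular
    (fun j₀ => (((1 - P) * ↑(δ ^ (-j₀)) : H →L[ℂ] H) : H →ₗ[ℂ] H)) ?_ ?_
  · intro j₀ j q hj
    show uact (δ ^ (-j₀)) _ - P (uact (δ ^ (-j₀)) _) = 0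
    rw [uact_zpow_neg_zpow, sub_eq_zero, hP.apply_of_mem (h_gen _ (sub_neg.mpr hj) q.1 q.2)]
  · intro j₀
    show LinearIndependent ℂ fun q : Γ × Fin n =>
      uact (δ ^ (-j₀)) (uact (δ ^ j₀) (uact (π q.1) (ψ q.2))) -
        P (uact (δ ^ (-j₀)) (uact (δ ^ j₀) (uact (π q.1) (ψ q.2))))
    simpa only [uact_zpow_neg_zpow, sub_self, zpow_zero, uact_one, uact_sub,
      hP.apply_uact_comm π hV₀inv] using hind

theorem stmt4
    {H : Type*} [NormedAddCommGroup H] [InnerProductSpace ℂ H] [CompleteSpace H]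
    [TopologicalSpace.SeparableSpace H]
    {Γ : Type*} [CommGroup Γ] [Countable Γ]
    (π : Γ →* unitary (H →L[ℂ] H))
    (δ : unitary (H →L[ℂ] H))
    (n : ℕ) (ψ : Fin n → H) (hψ : ∀ i, ψ i ≠ 0)
    (V₀ : Submodule ℂ H)
    (hV₀ : V₀ = (Submodule.span ℂ
      {x : H | ∃ j : ℤ, j < 0 ∧ ∃ γ : Γ, ∃ i : Fin n,
        x = uact (δ ^ j) (uact (π γ) (ψ i))}).topologicalClosure)
    -- `P` is the orthogonal projection of `H` onto `V₀`
    (P : H →L[ℂ] H)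
    (hP : ∀ x : H, P x ∈ V₀ ∧ x - P x ∈ V₀ᗮ)
    (hV₀inv : ∀ γ : Γ, ∀ v ∈ V₀, uact (π γ) v ∈ V₀)
    (hnotmem : ∀ i : Fin n, ψ i ∉ V₀)
    (hind : LinearIndependent ℂ (fun q : Γ × Fin n => uact (π q.1) (ψ q.2 - P (ψ q.2)))) :
    LinearIndependent ℂ
      (fun t : ℤ × Γ × Fin n => uact (δ ^ t.1) (uact (π t.2.1) (ψ t.2.2))) :=
  stmt4_general π δ n ψ V₀ hV₀ P hP hV₀inv hind
end
end

section
/- Let ε > 0 and let g : ℝ → ℂ be the function g = 1_{[−1/4,−1/8]∪[1/8,1/4]} + ε·1_{[−1/2,−1/4]∪[1/4,3/4]} (indicator functions), and let ψ ∈ L²(ℝ) be its inverse Fourier transform, ψ(x) = ∫_ℝ g(ξ) e^{2πiξx} dξ, so that ψ̂ = g. Then the dyadic wavelet system ((j,k) ↦ 2^{j/2} ψ(2^j x − k)) indexed by (j,k) ∈ ℤ × ℤ is linearly independent in L²(ℝ). -/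
/-!
On the Fourier side the wavelet `2^{j/2} ψ(2^j x - k)` becomes
`2^{-j/2} e^{-2πi k 2^{-j} η} g(2^{-j} η)`. If a finite combination of wavelets vanishes a.e., the
corresponding integrable combination `G` on the Fourier side has vanishing inverse transform, so
`G` vanishes wherever it is continuous. Let `j₀` be the largest scale present. On the window
`2^{j₀} (1/2, 3/4)` every term with `j < j₀` vanishes, because `g = 0` beyond `3/4 ≤ 2 · 1/2`,
while `g = ε` there at scale `j₀`. So `G` is `ε 2^{-j₀/2}` times a trigonometric polynomial in
`2^{-j₀} η` vanishing on an interval; multiplied by a power of `e^{2πit}` it becomes a polynomial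
with infinitely many roots on the unit circle, hence all top-scale coefficients vanish.
-/

open MeasureTheory

noncomputable section

open Complex FourierTransform Real Set

theorem fourierInv_real_eq {E : Type*} [NormedAddCommGroup E] [NormedSpace ℂ E] (f : ℝ → E)
    (x : ℝ) : 𝓕⁻ f x = ∫ ξ : ℝ, 𝐞 (ξ * x) • f ξ := by
  simp [fourierInv_eq_fourier_neg, fourier_real_eq]

theorem fourierInv_eq_integral_mul_cexp (f : ℝ → ℂ) (x : ℝ) :
    𝓕⁻ f x = ∫ ξ : ℝ, f ξ * cexp (2 * π * I * ξ * x) := by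
  simp only [fourierInv_real_eq, Circle.smul_def, fourierChar_apply, smul_eq_mul]
  congr 1 with ξ
  rw [mul_comm]
  push_cast
  ring_nf

theorem fourierInv_comp_mul_sub {E : Type*} [NormedAddCommGroup E] [NormedSpace ℂ E]
    (f : ℝ → E) {a : ℝ} (ha : a ≠ 0) (b x : ℝ) :
    𝓕⁻ f (a * x - b) = |a|⁻¹ • 𝓕⁻ (fun η => 𝐞 (-(a⁻¹ * η * b)) • f (a⁻¹ * η)) x := by
  simp only [fourierInv_real_eq, smul_smul, ← AddChar.map_add_eq_mul]
  have hsub : ∀ η : ℝ, η * x + -(a⁻¹ * η * b) = a⁻¹ * η * (a * x - b) := fun η => by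
    field_simp
    ring
  simp only [hsub, Measure.integral_comp_mul_left (fun ξ => 𝐞 (ξ * (a * x - b)) • f ξ), inv_inv,
    smul_smul, inv_mul_cancel₀ (abs_ne_zero.2 ha), one_smul]

theorem fourierInv_sum_smul {V E ι : Type*} [NormedAddCommGroup V] [InnerProductSpace ℝ V]
    [FiniteDimensional ℝ V] [MeasurableSpace V] [BorelSpace V]
    [NormedAddCommGroup E] [NormedSpace ℂ E] (s : Finset ι) (c : ι → ℂ) {f : ι → V → E}
    (hf : ∀ i ∈ s, Integrable (f i)) (w : V) :
    𝓕⁻ (fun v => ∑ i ∈ s, c i • f i v) w = ∑ i ∈ s, c i • 𝓕⁻ (f i) w := by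
  simp only [fourierInv_eq, Finset.smul_sum, smul_comm (𝐞 _) (c _)]
  rw [integral_finsetSum]
  · simp only [integral_smul]
  · intro i hi
    have := (fourierIntegral_convergent_iff (-w)).2 (hf i hi)
    simp only [inner_neg_right, neg_neg] at this
    exact this.smul (c i)

theorem eq_zero_of_fourierInv_ae_eq_zero {V E : Type*} [NormedAddCommGroup V]
    [InnerProductSpace ℝ V] [FiniteDimensional ℝ V] [MeasurableSpace V] [BorelSpace V]
    [NormedAddCommGroup E] [NormedSpace ℂ E] [CompleteSpace E] {f : V → E} (hf : Integrable f)
    (h : 𝓕⁻ f =ᵐ[volume] 0) {v : V} (hv : ContinuousAt f v) : f v = 0 := by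
  have hcont : Continuous (𝓕⁻ f) :=
    VectorFourier.fourierIntegral_continuous continuous_fourierChar continuous_inner.neg hf
  have hinv : 𝓕⁻ f = 0 := (hcont.ae_eq_iff_eq volume continuous_const).1 h
  have hfour : 𝓕 f = 0 := by
    ext w
    simpa [fourierInv_eq_fourier_neg] using congrFun hinv (-w)
  rw [← hf.fourier_fourierInv_eq (by rw [hfour]; exact integrable_zero _ _ _) hv, hinv]
  simp [fourier_eq]

theorem fourierChar_injOn_Ico (a : ℝ) : InjOn (fun t : ℝ => (𝐞 t : ℂ)) (Ico a (a + 1)) := by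
  intro t₁ h₁ t₂ h₂ h
  have hexp := Circle.exp_injOn_Ico (a := 2 * π * a) (b := 2 * π * a + 2 * π) (by linarith)
  have hπ := pi_pos
  exact mul_left_cancel₀ (by positivity) <| hexp
    ⟨by nlinarith [h₁.1], by nlinarith [h₁.2]⟩ ⟨by nlinarith [h₂.1], by nlinarith [h₂.2]⟩
    (Circle.ext h)

theorem eq_zero_of_sum_mul_fourierChar_eq_zero_on_Ioo {ι : Type*} {s : Finset ι} {n : ι → ℤ}
    (hn : InjOn n s) {c : ι → ℂ} {a b : ℝ} (hab : a < b)
    (h : ∀ t ∈ Ioo a b, ∑ i ∈ s, c i * 𝐞 (n i * t) = 0) :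
    ∀ i ∈ s, c i = 0 := by
  classical
  obtain ⟨m, hm⟩ := (s.image n).bddBelow
  set e : ι → ℕ := fun i => (n i - m).toNat
  have he : ∀ i ∈ s, (e i : ℤ) = n i - m := fun i hi =>
    Int.toNat_of_nonneg (sub_nonneg.2 (hm (Finset.mem_image_of_mem n hi)))
  set Q : Polynomial ℂ := ∑ i ∈ s, Polynomial.C (c i) * Polynomial.X ^ e i
  have hroot : ∀ t ∈ Ioo a b, Q.IsRoot (𝐞 t) := by
    intro t ht
    have hz : (𝐞 t : ℂ) ≠ 0 := Circle.coe_ne_zero _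
    have hpow : ∀ i ∈ s, (𝐞 t : ℂ) ^ e i = 𝐞 (n i * t) * (𝐞 t : ℂ) ^ (-m) := by
      intro i hi
      rw [← zpow_natCast, he i hi, ← zsmul_eq_mul, AddChar.map_zsmul_eq_zpow, Circle.coe_zpow,
        ← zpow_add₀ hz, sub_eq_add_neg]
    simp only [Q, Polynomial.IsRoot, Polynomial.eval_finsetSum, Polynomial.eval_mul,
      Polynomial.eval_C, Polynomial.eval_pow, Polynomial.eval_X]
    rw [Finset.sum_congr rfl fun i hi => by rw [hpow i hi, ← mul_assoc], ← Finset.sum_mul,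
      h t ht, zero_mul]
  have hQ : Q = 0 := by
    refine Q.eq_zero_of_infinite_isRoot (Infinite.mono ?_ (Infinite.image
      ((fourierChar_injOn_Ico a).mono (Ioo_subset_Ico_self.trans (Ico_subset_Ico_right
        (min_le_right b (a + 1))))) (Ioo_infinite (lt_min hab (by linarith)))))
    rintro _ ⟨t, ht, rfl⟩
    exact hroot t ⟨ht.1, ht.2.trans_le (min_le_left _ _)⟩
  intro i hi
  have hcoeff := congrArg (Polynomial.coeff · (e i)) hQ
  simp only [Q, Polynomial.finsetSum_coeff, Polynomial.coeff_C_mul_X_pow,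
    Polynomial.coeff_zero] at hcoeff
  rwa [Finset.sum_eq_single_of_mem i hi fun j hj hji => if_neg fun hij => hji
    (hn hj hi (by have := he i hi; have := he j hj; omega)), if_pos rfl] at hcoeff

/-- `𝓕⁻ (waveletHat g j k) x = 2 ^ j * 𝓕⁻ g (2 ^ j * x - k)` by `fourierInv_comp_mul_sub`; the
`L²`-normalisation of the wavelet is left to the coefficients. -/
def waveletHat (g : ℝ → ℂ) (j k : ℤ) (η : ℝ) : ℂ :=
  𝐞 (-(((2 : ℝ) ^ j)⁻¹ * η * k)) • g (((2 : ℝ) ^ j)⁻¹ * η)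

theorem integrable_waveletHat {g : ℝ → ℂ} (hg : Integrable g) (j k : ℤ) :
    Integrable (waveletHat g j k) := by
  have := (fourierIntegral_convergent_iff (μ := volume) (((2 : ℝ) ^ j)⁻¹ * k)).2
    (hg.comp_mul_left' (inv_ne_zero (zpow_ne_zero j two_ne_zero)))
  convert this using 3 with η
  simp only [waveletHat, RCLike.inner_apply, ringHom_apply]
  ring_nf

section Windows

variable {g : ℝ → ℂ} {a b : ℝ} {c : ℂ}

theorem waveletHat_eq_zero_of_lt (ha : 0 < a) (hb : b ≤ 2 * a) (hg0 : ∀ ξ, b < ξ → g ξ = 0)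
    {j j₀ : ℤ} (hj : j < j₀) {η : ℝ} (hη : 2 ^ j₀ * a < η) (k : ℤ) : waveletHat g j k η = 0 := by
  have h2 : (2 : ℝ) ≤ 2 ^ (j₀ - j) := by
    simpa using zpow_le_zpow_right₀ one_le_two (by omega : (1 : ℤ) ≤ j₀ - j)
  have hlt : b < ((2 : ℝ) ^ j)⁻¹ * η := calc
    b ≤ 2 * a := hb
    _ ≤ 2 ^ (j₀ - j) * a := by gcongr
    _ = ((2 : ℝ) ^ j)⁻¹ * (2 ^ j₀ * a) := by rw [zpow_sub₀ two_ne_zero]; ring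
    _ < ((2 : ℝ) ^ j)⁻¹ * η := by gcongr
  rw [waveletHat, hg0 _ hlt, smul_zero]

theorem sum_waveletHat_eq_of_mem_Ioo (ha : 0 < a) (hb : b ≤ 2 * a)
    (hgc : ∀ ξ ∈ Ioo a b, g ξ = c) (hg0 : ∀ ξ, b < ξ → g ξ = 0)
    {s : Finset (ℤ × ℤ)} (w : ℤ × ℤ → ℂ) {j₀ : ℤ} (hj₀ : ∀ p ∈ s, p.1 ≤ j₀) {η : ℝ}
    (hη : η ∈ Ioo (2 ^ j₀ * a) (2 ^ j₀ * b)) :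
    ∑ p ∈ s, w p • waveletHat g p.1 p.2 η =
      ∑ p ∈ s with p.1 = j₀, (w p * c) * 𝐞 ((-p.2 : ℤ) * (((2 : ℝ) ^ j₀)⁻¹ * η)) := by
  have h2 : (0 : ℝ) < 2 ^ j₀ := zpow_pos two_pos j₀
  rw [Finset.sum_filter]
  refine Finset.sum_congr rfl fun p hp => ?_
  split_ifs with hpj
  · rw [waveletHat, hpj, hgc _ ⟨(lt_inv_mul_iff₀ h2).2 hη.1, (inv_mul_lt_iff₀ h2).2 hη.2⟩,
      Circle.smul_def, smul_eq_mul]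
    push_cast
    ring_nf
  · rw [waveletHat_eq_zero_of_lt ha hb hg0 (lt_of_le_of_ne (hj₀ p hp) hpj) hη.1, smul_zero]

theorem top_scale_weights_eq_zero (hg : Integrable g) (ha : 0 < a) (hab : a < b)
    (hb : b ≤ 2 * a) (hc : c ≠ 0) (hgc : ∀ ξ ∈ Ioo a b, g ξ = c)
    (hg0 : ∀ ξ, b < ξ → g ξ = 0) {s : Finset (ℤ × ℤ)} {w : ℤ × ℤ → ℂ}
    (hG : 𝓕⁻ (fun η => ∑ p ∈ s, w p • waveletHat g p.1 p.2 η) =ᵐ[volume] 0)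
    {j₀ : ℤ} (hj₀ : ∀ p ∈ s, p.1 ≤ j₀) :
    ∀ p ∈ s, p.1 = j₀ → w p = 0 := by
  set G : ℝ → ℂ := fun η => ∑ p ∈ s, w p • waveletHat g p.1 p.2 η
  set H : ℝ → ℂ := fun t => ∑ p ∈ s with p.1 = j₀, (w p * c) * 𝐞 ((-p.2 : ℤ) * t)
  set U := Ioo (2 ^ j₀ * a) (2 ^ j₀ * b)
  have hGH : ∀ η ∈ U, G η = H (((2 : ℝ) ^ j₀)⁻¹ * η) := fun η hη =>
    sum_waveletHat_eq_of_mem_Ioo ha hb hgc hg0 w hj₀ hη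
  have hG0 : ∀ η ∈ U, G η = 0 := by
    intro η hη
    refine eq_zero_of_fourierInv_ae_eq_zero
      (integrable_finsetSum _ fun p _ => (integrable_waveletHat hg p.1 p.2).smul (w p)) hG ?_
    have hH : Continuous H := by fun_prop
    exact ((hH.comp (continuous_const_mul _)).continuousAt).congr
      (Filter.eventuallyEq_of_mem (isOpen_Ioo.mem_nhds hη) fun η' hη' => (hGH η' hη').symm)
  have hH0 : ∀ t ∈ Ioo a b, H t = 0 := by
    intro t ht
    have h2 : (0 : ℝ) < 2 ^ j₀ := zpow_pos two_pos j₀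
    have hmem : 2 ^ j₀ * t ∈ U := ⟨by gcongr; exact ht.1, by gcongr; exact ht.2⟩
    rw [← hG0 _ hmem, hGH _ hmem, inv_mul_cancel_left₀ h2.ne']
  have hinj : InjOn (fun p : ℤ × ℤ => -p.2) ↑(s.filter fun p => p.1 = j₀) := by
    intro p hp q hq hpq
    simp only [Finset.coe_filter, mem_ofPred_eq] at hp hq
    exact Prod.ext (hp.2.trans hq.2.symm) (neg_inj.1 hpq)
  intro p hp hpj
  exact (mul_eq_zero.1 (eq_zero_of_sum_mul_fourierChar_eq_zero_on_Ioo hinj hab hH0 p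
    (Finset.mem_filter.2 ⟨hp, hpj⟩))).resolve_right hc

theorem weights_eq_zero_of_fourierInv_ae_eq_zero (hg : Integrable g) (ha : 0 < a) (hab : a < b)
    (hb : b ≤ 2 * a) (hc : c ≠ 0) (hgc : ∀ ξ ∈ Ioo a b, g ξ = c) (hg0 : ∀ ξ, b < ξ → g ξ = 0)
    {s : Finset (ℤ × ℤ)} {w : ℤ × ℤ → ℂ}
    (hG : 𝓕⁻ (fun η => ∑ p ∈ s, w p • waveletHat g p.1 p.2 η) =ᵐ[volume] 0) :
    ∀ p ∈ s, w p = 0 := by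
  classical
  by_contra! ⟨q, hq, hwq⟩
  set s' := s.filter fun p => w p ≠ 0
  have hsum : (fun η => ∑ p ∈ s', w p • waveletHat g p.1 p.2 η) =
      fun η => ∑ p ∈ s, w p • waveletHat g p.1 p.2 η :=
    funext fun η => Finset.sum_filter_of_ne fun p _ => left_ne_zero_of_smul
  obtain ⟨p, hp, hmax⟩ := s'.exists_max_image Prod.fst ⟨q, Finset.mem_filter.2 ⟨hq, hwq⟩⟩
  exact (Finset.mem_filter.1 hp).2 <|
    top_scale_weights_eq_zero hg ha hab hb hc hgc hg0 (hsum ▸ hG) hmax p hp rfl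

end Windows

theorem sum_dyadic_wavelet_eq_fourierInv {g : ℝ → ℂ} (hg : Integrable g) (s : Finset (ℤ × ℤ))
    (coeff : ℤ × ℤ → ℂ) (x : ℝ) :
    ∑ p ∈ s, coeff p * (((2 : ℝ) ^ ((p.1 : ℝ) / 2) : ℝ) : ℂ) * 𝓕⁻ g (2 ^ p.1 * x - p.2) =
      𝓕⁻ (fun η => ∑ p ∈ s, (coeff p * (((2 : ℝ) ^ ((p.1 : ℝ) / 2) * ((2 : ℝ) ^ p.1)⁻¹ : ℝ) : ℂ))
        • waveletHat g p.1 p.2 η) x := by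
  rw [fourierInv_sum_smul _ _ fun p _ => integrable_waveletHat hg p.1 p.2]
  refine Finset.sum_congr rfl fun p _ => ?_
  rw [fourierInv_comp_mul_sub g (zpow_ne_zero _ two_ne_zero), abs_of_pos (zpow_pos two_pos _),
    Complex.real_smul, smul_eq_mul]
  unfold waveletHat
  push_cast
  ring

def psiHat (ε : ℝ) (ξ : ℝ) : ℂ :=
  Set.indicator (Set.Icc (-(1/4 : ℝ)) (-(1/8 : ℝ)) ∪ Set.Icc (1/8 : ℝ) (1/4 : ℝ))
      (fun _ => (1 : ℂ)) ξ
    + (ε : ℂ) * Set.indicator (Set.Icc (-(1/2 : ℝ)) (-(1/4 : ℝ)) ∪ Set.Icc (1/4 : ℝ) (3/4 : ℝ))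
      (fun _ => (1 : ℂ)) ξ

theorem integrable_psiHat (ε : ℝ) : Integrable (psiHat ε) := by
  refine Integrable.add ?_ (Integrable.const_mul ?_ _) <;>
  exact IntegrableOn.integrable_indicator
    (continuous_const.integrableOn_Icc.union continuous_const.integrableOn_Icc)
    (measurableSet_Icc.union measurableSet_Icc)

theorem psiHat_eq_zero_of_lt {ε ξ : ℝ} (hξ : 3 / 4 < ξ) : psiHat ε ξ = 0 := by
  rw [psiHat, indicator_of_notMem, indicator_of_notMem, mul_zero, add_zero] <;>
  · rintro (h | h) <;> linarith [h.1, h.2]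

theorem psiHat_eq_of_mem_Ioo {ε ξ : ℝ} (hξ : ξ ∈ Ioo (1 / 2) (3 / 4)) : psiHat ε ξ = ε := by
  have hmem : ξ ∈ Icc (-(1/2 : ℝ)) (-(1/4 : ℝ)) ∪ Icc (1/4 : ℝ) (3/4 : ℝ) :=
    Or.inr ⟨by linarith [hξ.1], hξ.2.le⟩
  rw [psiHat, indicator_of_notMem, indicator_of_mem hmem, mul_one, zero_add]
  rintro (h | h) <;> linarith [h.1, h.2, hξ.1]

theorem stmt17
    (ε : ℝ) (hε : 0 < ε)
    -- `g = 1_{[-1/4,-1/8] ∪ [1/8,1/4]} + ε · 1_{[-1/2,-1/4] ∪ [1/4,3/4]}`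
    (g : ℝ → ℂ)
    (hg : ∀ ξ : ℝ, g ξ =
      Set.indicator (Set.Icc (-(1/4 : ℝ)) (-(1/8 : ℝ)) ∪ Set.Icc (1/8 : ℝ) (1/4 : ℝ))
        (fun _ => (1 : ℂ)) ξ
      + (ε : ℂ) * Set.indicator (Set.Icc (-(1/2 : ℝ)) (-(1/4 : ℝ)) ∪ Set.Icc (1/4 : ℝ) (3/4 : ℝ))
        (fun _ => (1 : ℂ)) ξ)
    -- `ψ` is the inverse Fourier transform of `g`
    (ψ : ℝ → ℂ)
    (hψ : ∀ x : ℝ, ψ x = ∫ ξ : ℝ, g ξ *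
      Complex.exp (2 * (Real.pi : ℂ) * Complex.I * (ξ : ℂ) * (x : ℂ))) :
    -- the dyadic wavelet system `2^{j/2} ψ(2^j x - k)` is linearly independent in `L²(ℝ)`
    ∀ (s : Finset (ℤ × ℤ)) (coeff : ℤ × ℤ → ℂ),
      (∀ᵐ x ∂(volume : Measure ℝ),
        ∑ p ∈ s, coeff p * (((2 : ℝ) ^ ((p.1 : ℝ) / 2) : ℝ) : ℂ) *
          ψ ((2 : ℝ) ^ p.1 * x - (p.2 : ℝ)) = 0) →
      ∀ p ∈ s, coeff p = 0 := by
  obtain rfl : g = psiHat ε := funext hg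
  obtain rfl : ψ = 𝓕⁻ (psiHat ε) :=
    funext fun x => by rw [hψ, fourierInv_eq_integral_mul_cexp]
  intro s coeff hae
  have hG := weights_eq_zero_of_fourierInv_ae_eq_zero (integrable_psiHat ε) (a := 1 / 2)
    (b := 3 / 4) (by norm_num) (by norm_num) (by norm_num) (ofReal_ne_zero.2 hε.ne')
    (fun _ => psiHat_eq_of_mem_Ioo) (fun _ => psiHat_eq_zero_of_lt) (s := s) <| by
      filter_upwards [hae] with x hx
      rw [← sum_dyadic_wavelet_eq_fourierInv (integrable_psiHat ε), hx, Pi.zero_apply]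
  intro p hp
  simpa [zpow_ne_zero p.1 (two_ne_zero' ℂ), (rpow_pos_of_pos two_pos _).ne'] using hG p hp
end
end
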